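/- arXiv:1907.11978 — 2 statements merged into one kernel-verified Lean document; each statement's English description precedes it below -/
import Mathlib

section
/- The Heawood graph contains exactly 56 twelve-cycles; that is, the set of subgraphs of the Heawood graph that are isomorphic to the cycle graph on 12 vertices has cardinality 56. -/
instance : DecidablePred (Even : ZMod 14 → Prop) :=
  fun i => decidable_of_iff (∃ r, i = r + r) Iff.rfl

instance : DecidablePred (Odd : ZMod 14 → Prop) :=
  fun i => decidable_of_iff (∃ r, i = 2 * r + 1) Iff.rfl

/-- The Heawood graph: the simple graph on vertex set `ZMod 14` in which distinct vertices
`i` and `j` are adjacent iff `j = i + 1`, or `j = i - 1`, or (`i` is even and `j = i + 5`),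
or (`i` is odd and `j = i - 5`). -/
def heawood : SimpleGraph (ZMod 14) where
  Adj i j := i ≠ j ∧ (j = i + 1 ∨ j = i - 1 ∨ (Even i ∧ j = i + 5) ∨ (Odd i ∧ j = i - 5))
  symm := ⟨by intro i j; revert i j; decide⟩
  loopless := ⟨by intro i; revert i; decide⟩

/-- An `n`-cycle of a simple graph `G` is a subgraph of `G` isomorphic to the cycle graph
on `n` vertices. -/
def IsNCycle {V : Type*} {G : SimpleGraph V} (n : ℕ) (C : G.Subgraph) : Prop :=
  Nonempty (C.coe ≃g SimpleGraph.cycleGraph n)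

instance : DecidableRel heawood.Adj :=
  fun a b => decidable_of_iff
    (a ≠ b ∧ (b = a + 1 ∨ b = a - 1 ∨ (Even a ∧ b = a + 5) ∨ (Odd a ∧ b = a - 5))) Iff.rfl

def nbhd (i : ZMod 14) : List (ZMod 14) :=
  if Even i then [i+1, i-1, i+5] else [i+1, i-1, i-5]

def extFrom (s : ZMod 14) (L : List (List (ZMod 14))) : List (List (ZMod 14)) :=
  L.flatMap fun p => match p with
    | [] => []
    | v :: _ => ((nbhd v).filter (fun w => decide (s.val < w.val ∧ w ∉ p))).map (fun w => w :: p)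

def isGood : List (ZMod 14) → Bool
  | v0 :: v1 :: rest => decide (((v0::v1::rest).getLast (by simp)) ∈ nbhd v0
      ∧ v1.val < ((v0::v1::rest).getLast (by simp)).val)
  | _ => false

def canonPaths : List (List (ZMod 14)) :=
  ((List.range 14).flatMap
    (fun n => ((extFrom n)^[11] [[(n : ZMod 14)]]).map List.reverse)).filter isGood

def fOf (l : List (ZMod 14)) (i : Fin 12) : ZMod 14 := l.getD i.val 0

def cycEdgesF (f : Fin 12 → ZMod 14) : Finset (Sym2 (ZMod 14)) :=
  Finset.univ.image (fun i => s(f i, f (i+1)))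

def listOf (f : Fin 12 → ZMod 14) : List (ZMod 14) :=
  [f 0, f 1, f 2, f 3, f 4, f 5, f 6, f 7, f 8, f 9, f 10, f 11]

lemma adj_nbhd : ∀ a b : ZMod 14, heawood.Adj a b ↔ (a ≠ b ∧ b ∈ nbhd a) := by decide

lemma mem_nbhd {a b : ZMod 14} (h : heawood.Adj a b) : b ∈ nbhd a := ((adj_nbhd a b).1 h).2

/-- The subgraph determined by a cyclic sequence of vertices. -/
def sgOf (f : Fin 12 → ZMod 14) : heawood.Subgraph where
  verts := Set.range f
  Adj a b := heawood.Adj a b ∧ s(a, b) ∈ cycEdgesF f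
  adj_sub h := h.1
  edge_vert := by
    rintro a b ⟨-, hm⟩
    simp only [cycEdgesF, Finset.mem_image, Finset.mem_univ, true_and] at hm
    obtain ⟨k, hk⟩ := hm
    rw [Sym2.eq_iff] at hk
    rcases hk with ⟨h1, -⟩ | ⟨-, h2⟩
    · exact ⟨k, h1⟩
    · exact ⟨k + 1, h2⟩
  symm := ⟨by
    rintro a b ⟨h1, h2⟩
    exact ⟨h1.symm, by rwa [Sym2.eq_swap]⟩⟩

lemma mem_cycEdgesF {f : Fin 12 → ZMod 14} (hf : Function.Injective f) (i j : Fin 12) :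
    s(f i, f j) ∈ cycEdgesF f ↔ (j = i + 1 ∨ i = j + 1) := by
  simp only [cycEdgesF, Finset.mem_image, Finset.mem_univ, true_and]
  constructor
  · rintro ⟨k, hk⟩
    rw [Sym2.eq_iff] at hk
    rcases hk with ⟨h1, h2⟩ | ⟨h1, h2⟩
    · exact Or.inl (by rw [← hf h1, hf h2])
    · exact Or.inr (by rw [← hf h2, hf h1])
  · rintro (rfl | rfl)
    · exact ⟨i, rfl⟩
    · exact ⟨j, Sym2.eq_swap⟩

open Fin.CommRing in
lemma cycEdgesF_rot (f : Fin 12 → ZMod 14) (k : Fin 12) :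
    cycEdgesF (fun i => f (i + k)) = cycEdgesF f := by
  ext e
  simp only [cycEdgesF, Finset.mem_image, Finset.mem_univ, true_and]
  constructor
  · rintro ⟨i, hi⟩
    exact ⟨i + k, by rw [← hi]; ring_nf⟩
  · rintro ⟨i, hi⟩
    refine ⟨i - k, ?_⟩
    rw [← hi]; ring_nf
open Fin.CommRing in
lemma cycEdgesF_rev (f : Fin 12 → ZMod 14) :
    cycEdgesF (fun i => f (-i)) = cycEdgesF f := by
  ext e
  simp only [cycEdgesF, Finset.mem_image, Finset.mem_univ, true_and]
  constructor
  · rintro ⟨i, hi⟩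
    refine ⟨-i - 1, ?_⟩
    rw [← hi, Sym2.eq_swap]; ring_nf
  · rintro ⟨i, hi⟩
    refine ⟨-i - 1, ?_⟩
    rw [← hi, Sym2.eq_swap]; ring_nf

def IsCycF (f : Fin 12 → ZMod 14) : Prop :=
  Function.Injective f ∧ ∀ i, heawood.Adj (f i) (f (i + 1))

lemma fin12_adj_iff : ∀ i j : Fin 12,
    ((i - j).val = 1 ∨ (j - i).val = 1) ↔ (j = i + 1 ∨ i = j + 1) := by decide

lemma sgOf_adj_iff {f : Fin 12 → ZMod 14} (hf : IsCycF f) (a b : ZMod 14) :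
    (sgOf f).Adj a b ↔ s(a, b) ∈ cycEdgesF f := by
  refine ⟨And.right, fun hm => ⟨?_, hm⟩⟩
  simp only [cycEdgesF, Finset.mem_image, Finset.mem_univ, true_and] at hm
  obtain ⟨k, hk⟩ := hm
  rw [Sym2.eq_iff] at hk
  rcases hk with ⟨h1, h2⟩ | ⟨h1, h2⟩
  · rw [← h1, ← h2]; exact hf.2 k
  · rw [← h1, ← h2]; exact (hf.2 k).symm

lemma edge_eq_of_sgOf_eq {f g : Fin 12 → ZMod 14} (hf : IsCycF f) (hg : IsCycF g)
    (h : sgOf f = sgOf g) : cycEdgesF f = cycEdgesF g := by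
  ext e
  induction e using Sym2.ind with
  | _ a b =>
    rw [← sgOf_adj_iff hf, ← sgOf_adj_iff hg, h]

lemma isNCycle_sgOf {f : Fin 12 → ZMod 14} (hf : IsCycF f) : IsNCycle 12 (sgOf f) := by
  have hval : ∀ k : Fin 12, ((Equiv.ofInjective f hf.1 k : Set.range f) : ZMod 14) = f k :=
    fun k => rfl
  have φ : SimpleGraph.cycleGraph 12 ≃g (sgOf f).coe := by
    refine ⟨Equiv.ofInjective f hf.1, ?_⟩
    intro i j
    rw [SimpleGraph.Subgraph.coe_adj, SimpleGraph.cycleGraph_adj']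
    show (sgOf f).Adj (f i) (f j) ↔ _
    rw [fin12_adj_iff]
    constructor
    · rintro ⟨-, hm⟩
      exact (mem_cycEdgesF hf.1 i j).1 hm
    · rintro (rfl | rfl)
      · exact ⟨hf.2 i, (mem_cycEdgesF hf.1 i (i + 1)).2 (Or.inl rfl)⟩
      · exact ⟨(hf.2 j).symm, (mem_cycEdgesF hf.1 (j + 1) j).2 (Or.inr rfl)⟩
  exact ⟨φ.symm⟩

lemma cyc_adj_succ : ∀ i : Fin 12, (SimpleGraph.cycleGraph 12).Adj i (i + 1) := by decide

lemma extract {C : heawood.Subgraph} (hC : IsNCycle 12 C) :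
    ∃ f : Fin 12 → ZMod 14, IsCycF f ∧ C = sgOf f := by
  obtain ⟨ψ⟩ := hC
  set f : Fin 12 → ZMod 14 := fun i => ((ψ.symm i : C.verts) : ZMod 14) with hfdef
  have hinj : Function.Injective f :=
    Subtype.val_injective.comp ψ.symm.injective
  have hcoeAdj : ∀ i j : Fin 12, C.Adj (f i) (f j) ↔ (SimpleGraph.cycleGraph 12).Adj i j := by
    intro i j
    have h2 := ψ.symm.map_adj_iff (v := i) (w := j)
    rw [← h2]
    rfl
  have hadjC : ∀ i : Fin 12, C.Adj (f i) (f (i + 1)) :=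
    fun i => (hcoeAdj i (i + 1)).2 (cyc_adj_succ i)
  have hcyc : IsCycF f := ⟨hinj, fun i => C.adj_sub (hadjC i)⟩
  refine ⟨f, hcyc, ?_⟩
  have hverts : C.verts = Set.range f := by
    ext v
    constructor
    · intro hv
      exact ⟨ψ ⟨v, hv⟩, by simp [hfdef]⟩
    · rintro ⟨i, rfl⟩
      exact (ψ.symm i).2
  refine SimpleGraph.Subgraph.ext hverts ?_
  funext a b
  apply propext
  constructor
  · intro h
    have ha : a ∈ C.verts := C.edge_vert h
    have hb : b ∈ C.verts := C.edge_vert h.symm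
    rw [hverts] at ha hb
    obtain ⟨i, rfl⟩ := ha
    obtain ⟨j, rfl⟩ := hb
    have := (hcoeAdj i j).1 h
    rw [SimpleGraph.cycleGraph_adj', fin12_adj_iff] at this
    exact ⟨C.adj_sub h, (mem_cycEdgesF hinj i j).2 this⟩
  · rintro ⟨-, hm⟩
    simp only [cycEdgesF, Finset.mem_image, Finset.mem_univ, true_and] at hm
    obtain ⟨k, hk⟩ := hm
    rw [Sym2.eq_iff] at hk
    rcases hk with ⟨h1, h2⟩ | ⟨h1, h2⟩
    · rw [← h1, ← h2]; exact hadjC k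
    · rw [← h1, ← h2]; exact (hadjC k).symm

open Fin.CommRing in
lemma isCycF_rot {f : Fin 12 → ZMod 14} (hf : IsCycF f) (k : Fin 12) :
    IsCycF (fun i => f (i + k)) := by
  refine ⟨fun a b hab => ?_, fun i => ?_⟩
  · have h := hf.1 hab
    exact add_right_cancel h
  · have h := hf.2 (i + k)
    show heawood.Adj (f (i + k)) (f (i + 1 + k))
    have e : i + 1 + k = i + k + 1 := by ring
    rw [e]
    exact h

open Fin.CommRing in
lemma isCycF_rev {f : Fin 12 → ZMod 14} (hf : IsCycF f) :
    IsCycF (fun i => f (-i)) := by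
  refine ⟨fun a b hab => ?_, fun i => ?_⟩
  · have h := hf.1 hab
    exact neg_injective h
  · show heawood.Adj (f (-i)) (f (-(i+1)))
    have h := (hf.2 (-i - 1)).symm
    have e1 : (-i - 1 : Fin 12) + 1 = -i := by ring
    rw [e1] at h
    have e2 : (-(i + 1) : Fin 12) = -i - 1 := by ring
    rw [e2]
    exact h

lemma range_rot (f : Fin 12 → ZMod 14) (k : Fin 12) :
    Set.range (fun i => f (i + k)) = Set.range f := by
  ext v
  constructor
  · rintro ⟨i, rfl⟩; exact ⟨i + k, rfl⟩
  · rintro ⟨i, rfl⟩; exact ⟨i - k, by simp⟩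

lemma range_rev (f : Fin 12 → ZMod 14) :
    Set.range (fun i => f (-i)) = Set.range f := by
  ext v
  constructor
  · rintro ⟨i, rfl⟩; exact ⟨-i, rfl⟩
  · rintro ⟨i, rfl⟩; exact ⟨-i, by simp⟩

/-- Canonicalization: any cyclic sequence can be re-indexed so that it starts at the minimum
vertex and goes in the direction of the smaller neighbour, preserving the subgraph data. -/
lemma canonicalize {f : Fin 12 → ZMod 14} (hf : IsCycF f) :
    ∃ g : Fin 12 → ZMod 14, IsCycF g ∧ cycEdgesF g = cycEdgesF f ∧
      Set.range g = Set.range f ∧ (∀ j, (g 0).val ≤ (g j).val) ∧ (g 1).val < (g 11).val := by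
  obtain ⟨i₀, -, hmin⟩ := Finset.exists_min_image Finset.univ (fun i => (f i).val)
    ⟨0, Finset.mem_univ 0⟩
  set g : Fin 12 → ZMod 14 := fun i => f (i + i₀) with hg
  have hgc : IsCycF g := isCycF_rot hf i₀
  have hgE : cycEdgesF g = cycEdgesF f := cycEdgesF_rot f i₀
  have hgR : Set.range g = Set.range f := range_rot f i₀
  have hgmin : ∀ j, (g 0).val ≤ (g j).val := by
    intro j
    have : g 0 = f i₀ := by simp [hg]
    rw [this]
    exact hmin _ (Finset.mem_univ _)
  have hne : (g 1).val ≠ (g 11).val := by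
    intro h
    have : g 1 = g 11 := ZMod.val_injective _ h
    have := hgc.1 this
    exact absurd this (by decide)
  rcases lt_or_gt_of_ne hne with hlt | hgt
  · exact ⟨g, hgc, hgE, hgR, hgmin, hlt⟩
  · refine ⟨fun i => g (-i), isCycF_rev hgc, by rw [cycEdgesF_rev]; exact hgE,
      by rw [range_rev]; exact hgR, ?_, ?_⟩
    · intro j
      have h0 : (-0 : Fin 12) = 0 := by decide
      simp only [h0]
      exact hgmin _
    · show (g (-1)).val < (g (-11)).val
      have e1 : (-1 : Fin 12) = 11 := by decide
      have e2 : (-11 : Fin 12) = 1 := by decide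
      rw [e1, e2]
      exact hgt

lemma mem_extFrom_step {f : Fin 12 → ZMod 14} (hinj : Function.Injective f)
    (idxs : List (Fin 12)) (a b : Fin 12) (L : List (List (ZMod 14)))
    (hL : (a :: idxs).map f ∈ L) (hadj : heawood.Adj (f a) (f b))
    (hlt : (f 0).val < (f b).val) (hnm : b ∉ a :: idxs) :
    (b :: a :: idxs).map f ∈ extFrom (f 0) L := by
  rw [extFrom, List.mem_flatMap]
  refine ⟨(a :: idxs).map f, hL, ?_⟩
  show f b :: (a :: idxs).map f ∈ (((nbhd (f a)).filter _).map _)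
  rw [List.mem_map]
  refine ⟨f b, ?_, rfl⟩
  rw [List.mem_filter]
  refine ⟨mem_nbhd hadj, ?_⟩
  rw [decide_eq_true_eq]
  refine ⟨hlt, ?_⟩
  rw [List.mem_map]
  rintro ⟨j, hj, hjb⟩
  exact hnm ((hinj hjb) ▸ hj)

lemma completeness {f : Fin 12 → ZMod 14} (hf : IsCycF f)
    (hmin : ∀ j, (f 0).val ≤ (f j).val) (hdir : (f 1).val < (f 11).val) :
    listOf f ∈ canonPaths := by
  have hinj := hf.1
  have hlt : ∀ j : Fin 12, j ≠ 0 → (f 0).val < (f j).val := by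
    intro j hj
    refine lt_of_le_of_ne (hmin j) fun h => hj (hinj (ZMod.val_injective _ h)).symm
  -- build the reversed path by 11 extension steps
  have h0 : ([(0 : Fin 12)]).map f ∈ (extFrom (f 0))^[0] [[f 0]] := by
    simp [List.map]
  have step : ∀ (idxs : List (Fin 12)) (a b : Fin 12) (k : ℕ),
      (a :: idxs).map f ∈ (extFrom (f 0))^[k] [[f 0]] → heawood.Adj (f a) (f b) →
      b ≠ 0 → b ∉ a :: idxs →
      (b :: a :: idxs).map f ∈ (extFrom (f 0))^[k + 1] [[f 0]] := by
    intro idxs a b k hmem hadj hb0 hnm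
    rw [Function.iterate_succ_apply']
    exact mem_extFrom_step hinj idxs a b _ hmem hadj (hlt b hb0) hnm
  have h1 := step [] 0 1 0 h0 (hf.2 0) (by decide) (by decide)
  have h2 := step [0] 1 2 1 h1 (hf.2 1) (by decide) (by decide)
  have h3 := step [1,0] 2 3 2 h2 (hf.2 2) (by decide) (by decide)
  have h4 := step [2,1,0] 3 4 3 h3 (hf.2 3) (by decide) (by decide)
  have h5 := step [3,2,1,0] 4 5 4 h4 (hf.2 4) (by decide) (by decide)
  have h6 := step [4,3,2,1,0] 5 6 5 h5 (hf.2 5) (by decide) (by decide)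
  have h7 := step [5,4,3,2,1,0] 6 7 6 h6 (hf.2 6) (by decide) (by decide)
  have h8 := step [6,5,4,3,2,1,0] 7 8 7 h7 (hf.2 7) (by decide) (by decide)
  have h9 := step [7,6,5,4,3,2,1,0] 8 9 8 h8 (hf.2 8) (by decide) (by decide)
  have h10 := step [8,7,6,5,4,3,2,1,0] 9 10 9 h9 (hf.2 9) (by decide) (by decide)
  have h11 := step [9,8,7,6,5,4,3,2,1,0] 10 11 10 h10 (hf.2 10) (by decide) (by decide)
  -- h11 : [f 11, ..., f 0] ∈ (extFrom (f 0))^[11] [[f 0]]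
  rw [canonPaths, List.mem_filter]
  constructor
  · rw [List.mem_flatMap]
    refine ⟨(f 0).val, ?_, ?_⟩
    · exact List.mem_flatMap.2 ⟨(f 0).val, List.mem_range.2 (ZMod.val_lt (f 0)),
        List.mem_singleton_self _⟩
    · rw [List.mem_map]
      have hcast : ((((f 0).val : ℕ)) : ZMod 14) = f 0 := ZMod.natCast_rightInverse (f 0)
      rw [hcast]
      exact ⟨([11,10,9,8,7,6,5,4,3,2,1,0] : List (Fin 12)).map f, h11, rfl⟩
  · show isGood (listOf f) = true
    rw [show listOf f = f 0 :: f 1 :: [f 2, f 3, f 4, f 5, f 6, f 7, f 8, f 9, f 10, f 11]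
      from rfl]
    rw [isGood, decide_eq_true_eq]
    constructor
    · have h := (hf.2 11).symm
      have e : (11 + 1 : Fin 12) = 0 := by decide
      rw [e] at h
      exact mem_nbhd h
    · exact hdir
def canonList : List (List (ZMod 14)) :=
  [[0,1,2,3,4,5,6,11,10,9,8,13],
  [0,1,2,3,4,9,10,11,6,7,8,13],
  [0,1,2,3,4,9,8,7,6,11,12,13],
  [0,1,2,3,4,9,8,13,12,11,6,5],
  [0,1,2,3,12,13,8,9,10,11,6,5],
  [0,1,2,3,12,11,10,9,8,7,6,5],
  [0,1,2,3,12,11,6,7,8,9,4,5],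
  [0,1,2,3,12,11,6,5,4,9,8,13],
  [0,1,2,7,8,9,10,11,12,3,4,5],
  [0,1,2,7,8,9,4,5,6,11,12,13],
  [0,1,2,7,8,9,4,3,12,11,6,5],
  [0,1,2,7,8,13,12,11,10,9,4,5],
  [0,1,2,7,6,5,4,9,10,11,12,13],
  [0,1,2,7,6,11,12,13,8,9,4,5],
  [0,1,2,7,6,11,12,3,4,9,8,13],
  [0,1,2,7,6,11,10,9,4,3,12,13],
  [0,1,10,11,12,13,8,7,2,3,4,5],
  [0,1,10,11,12,3,4,5,6,7,8,13],
  [0,1,10,11,12,3,4,9,8,7,6,5],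
  [0,1,10,11,12,3,2,7,8,9,4,5],
  [0,1,10,11,6,7,8,9,4,3,12,13],
  [0,1,10,11,6,7,8,13,12,3,4,5],
  [0,1,10,11,6,7,2,3,4,9,8,13],
  [0,1,10,11,6,5,4,3,2,7,8,13],
  [0,1,10,9,8,7,6,5,4,3,12,13],
  [0,1,10,9,8,7,6,11,12,3,4,5],
  [0,1,10,9,8,7,2,3,12,11,6,5],
  [0,1,10,9,8,13,12,3,2,7,6,5],
  [0,1,10,9,4,5,6,7,2,3,12,13],
  [0,1,10,9,4,3,2,7,6,11,12,13],
  [0,1,10,9,4,3,12,13,8,7,6,5],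
  [0,1,10,9,4,3,12,11,6,7,8,13],
  [0,5,6,7,8,9,10,1,2,3,12,13],
  [0,5,6,7,2,3,4,9,10,11,12,13],
  [0,5,6,7,2,3,12,11,10,9,8,13],
  [0,5,6,7,2,1,10,9,4,3,12,13],
  [0,5,6,11,12,3,2,1,10,9,8,13],
  [0,5,6,11,10,9,8,7,2,3,12,13],
  [0,5,6,11,10,9,4,3,2,7,8,13],
  [0,5,6,11,10,1,2,3,4,9,8,13],
  [0,5,4,3,2,1,10,11,6,7,8,13],
  [0,5,4,3,2,7,8,9,10,11,12,13],
  [0,5,4,3,2,7,6,11,10,9,8,13],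
  [0,5,4,3,12,11,10,1,2,7,8,13],
  [0,5,4,9,10,11,12,3,2,7,8,13],
  [0,5,4,9,10,11,6,7,2,3,12,13],
  [0,5,4,9,10,1,2,7,6,11,12,13],
  [0,5,4,9,8,7,2,1,10,11,12,13],
  [1,2,3,4,5,6,7,8,13,12,11,10],
  [1,2,3,4,5,6,11,12,13,8,9,10],
  [1,2,3,12,13,8,9,4,5,6,11,10],
  [1,2,3,12,13,8,7,6,5,4,9,10],
  [1,2,7,8,13,12,11,6,5,4,9,10],
  [1,2,7,8,13,12,3,4,5,6,11,10],
  [1,2,7,6,5,4,3,12,13,8,9,10],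
  [1,2,7,6,5,4,9,8,13,12,11,10]]

set_option maxRecDepth 2000000 in
set_option maxHeartbeats 20000000 in
lemma canonEq : canonPaths = canonList := by decide

set_option maxRecDepth 2000000 in
set_option maxHeartbeats 20000000 in
lemma canon_pairwise :
    List.Pairwise (fun l l' => cycEdgesF (fOf l) ≠ cycEdgesF (fOf l')) canonList := by decide

set_option maxRecDepth 2000000 in
set_option maxHeartbeats 20000000 in
lemma canon_props : ∀ l ∈ canonList,
    Function.Injective (fOf l) ∧ ∀ i : Fin 12, heawood.Adj (fOf l i) (fOf l (i + 1)) := by decide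

lemma fOf_listOf (f : Fin 12 → ZMod 14) : fOf (listOf f) = f := by
  funext i
  fin_cases i <;> rfl

noncomputable def F (l : {l : List (ZMod 14) // l ∈ canonList}) :
    {C : heawood.Subgraph // IsNCycle 12 C} :=
  ⟨sgOf (fOf l.1), isNCycle_sgOf (canon_props l.1 l.2)⟩

lemma F_injective : Function.Injective F := by
  rintro ⟨l, hl⟩ ⟨l', hl'⟩ h
  simp only [F, Subtype.mk.injEq] at h
  have hE := edge_eq_of_sgOf_eq (canon_props l hl) (canon_props l' hl') h
  haveI : Std.Symm (fun a b : List (ZMod 14) => cycEdgesF (fOf a) ≠ cycEdgesF (fOf b)) :=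
    ⟨fun a b hab => hab.symm⟩
  have hforall := List.Pairwise.forall canon_pairwise
  by_contra hne
  exact hforall hl hl' (fun e => hne (by simp [e])) hE

lemma F_surjective : Function.Surjective F := by
  rintro ⟨C, hC⟩
  obtain ⟨f, hf, rfl⟩ := extract hC
  obtain ⟨g, hg, hE, hR, hmin, hdir⟩ := canonicalize hf
  have hmem : listOf g ∈ canonList := by
    rw [← canonEq]
    exact completeness hg hmin hdir
  refine ⟨⟨listOf g, hmem⟩, ?_⟩
  simp only [F, Subtype.mk.injEq]
  rw [fOf_listOf]
  refine SimpleGraph.Subgraph.ext ?_ ?_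
  · show Set.range g = Set.range f
    exact hR
  · funext a b
    show (heawood.Adj a b ∧ s(a,b) ∈ cycEdgesF g) = (heawood.Adj a b ∧ s(a,b) ∈ cycEdgesF f)
    rw [hE]

lemma canon_nodup : canonList.Nodup :=
  canon_pairwise.imp (fun {a b} h => fun e => h (e ▸ rfl))

/-- The Heawood graph contains exactly 56 12-cycles. -/
theorem heawood_count_12_cycles :
    Nat.card {C : heawood.Subgraph // IsNCycle 12 C} = 56 := by
  have hbij : Function.Bijective F := ⟨F_injective, F_surjective⟩
  rw [← Nat.card_eq_of_bijective F hbij]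
  have e1 : {l : List (ZMod 14) // l ∈ canonList} ≃ {l // l ∈ canonList.toFinset} :=
    Equiv.subtypeEquivRight (fun l => (List.mem_toFinset).symm)
  rw [Nat.card_congr e1, Nat.card_eq_finsetCard, List.toFinset_card_of_nodup canon_nodup]
  rfl
end

section
/- The automorphism group of the Heawood graph acts transitively on the set of unordered pairs of vertex-disjoint 6-cycles: for any two unordered pairs {A₁, A₂} and {B₁, B₂}, where A₁, A₂ are vertex-disjoint 6-cycles of the Heawood graph and B₁, B₂ are vertex-disjoint 6-cycles of the Heawood graph, there exists an automorphism φ of the Heawood graph such that φ maps the union A₁ ∪ A₂ onto the union B₁ ∪ B₂ (indeed mapping {A₁, A₂} onto {B₁, B₂} as a pair of subgraphs). -/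
instance inst_s19 : DecidableRel heawood.Adj :=
  fun i j => decidable_of_iff
    (i ≠ j ∧ (j = i + 1 ∨ j = i - 1 ∨ (Even i ∧ j = i + 5) ∨ (Odd i ∧ j = i - 5))) Iff.rfl

/-- Neighbor lists of the Heawood graph. -/
def nbrs : ZMod 14 → List (ZMod 14) :=
  ![[1,5,13], [0,2,10], [1,3,7], [2,4,12], [3,5,9], [0,4,6], [5,7,11], [2,6,8],
    [7,9,13], [4,8,10], [1,9,11], [6,10,12], [3,11,13], [0,8,12]]

set_option maxHeartbeats 1600000 in
theorem adj_iff_nbrs : ∀ x y : ZMod 14, heawood.Adj x y ↔ y ∈ nbrs x := by decide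

/-- The 28 vertex sets of `6`-cycles of the Heawood graph, as sorted lists. -/
def L28 : List (List (ZMod 14)) := [[0,1,2,3,4,5], [0,1,2,3,12,13], [0,1,2,5,6,7], [0,1,2,7,8,13], [0,1,4,5,9,10], [0,1,5,6,10,11], [0,1,8,9,10,13], [0,1,10,11,12,13], [0,3,4,5,12,13], [0,4,5,8,9,13], [0,5,6,7,8,13], [0,5,6,11,12,13], [1,2,3,4,9,10], [1,2,3,10,11,12], [1,2,6,7,10,11], [1,2,7,8,9,10], [2,3,4,5,6,7], [2,3,4,7,8,9], [2,3,6,7,11,12], [2,3,7,8,12,13], [3,4,5,6,11,12], [3,4,8,9,12,13], [3,4,9,10,11,12], [4,5,6,7,8,9], [4,5,6,9,10,11], [6,7,8,9,10,11], [6,7,8,11,12,13], [8,9,10,11,12,13]]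

def s0 : List (ZMod 14) := [0,1,2,3,4,5]
def t0 : List (ZMod 14) := [6,7,8,9,10,11]

/-- An entry: a pair of disjoint cycle vertex sets, an automorphism carrying
`(s0, t0)` to it, and its inverse. -/
def Ent : Type :=
  List (ZMod 14) × List (ZMod 14) × (Fin 14 → ZMod 14) × (Fin 14 → ZMod 14)

def pf (e : Ent) : ZMod 14 → ZMod 14 := fun x => e.2.2.1 x
def qf (e : Ent) : ZMod 14 → ZMod 14 := fun x => e.2.2.2 x

abbrev EntOK (e : Ent) : Prop :=
  (∀ x, qf e (pf e x) = x) ∧ (∀ x, pf e (qf e x) = x) ∧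
  (∀ x y : ZMod 14, y ∈ nbrs x → pf e y ∈ nbrs (pf e x)) ∧
  (∀ x y : ZMod 14, y ∈ nbrs x → qf e y ∈ nbrs (qf e x)) ∧
  (∀ x : ZMod 14, x ∈ e.1 ↔ ∃ y ∈ s0, pf e y = x) ∧
  (∀ x : ZMod 14, x ∈ e.2.1 ↔ ∃ y ∈ t0, pf e y = x)

def E0 : List Ent := [([0,1,2,3,4,5], [6,7,8,9,10,11], ![0,1,2,3,4,5,6,7,8,9,10,11,12,13], ![0,1,2,3,4,5,6,7,8,9,10,11,12,13]),
  ([0,1,2,3,4,5], [6,7,8,11,12,13], ![1,0,5,4,3,2,7,6,11,12,13,8,9,10], ![1,0,5,4,3,2,7,6,11,12,13,8,9,10]),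
  ([0,1,2,3,4,5], [8,9,10,11,12,13], ![2,1,0,5,4,3,12,13,8,9,10,11,6,7], ![2,1,0,5,4,3,12,13,8,9,10,11,6,7])]

def E1 : List Ent := [([0,1,2,3,12,13], [4,5,6,7,8,9], ![1,0,13,12,3,2,7,8,9,4,5,6,11,10], ![1,0,5,4,9,10,11,6,7,8,13,12,3,2]),
  ([0,1,2,3,12,13], [4,5,6,9,10,11], ![2,1,0,13,12,3,4,5,6,11,10,9,8,7], ![2,1,0,5,6,7,8,13,12,11,10,9,4,3]),
  ([0,1,2,3,12,13], [6,7,8,9,10,11], ![0,1,2,3,12,13,8,7,6,11,10,9,4,5], ![0,1,2,3,12,13,8,7,6,11,10,9,4,5])]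

def E2 : List Ent := [([0,1,2,5,6,7], [3,4,8,9,12,13], ![1,0,5,6,7,2,3,4,9,8,13,12,11,10], ![1,0,5,6,7,2,3,4,9,8,13,12,11,10]),
  ([0,1,2,5,6,7], [3,4,9,10,11,12], ![0,1,2,7,6,5,4,3,12,11,10,9,8,13], ![0,1,2,7,6,5,4,3,12,11,10,9,8,13]),
  ([0,1,2,5,6,7], [8,9,10,11,12,13], ![2,1,0,5,6,7,8,13,12,11,10,9,4,3], ![2,1,0,13,12,3,4,5,6,11,10,9,8,7])]

def E3 : List Ent := [([0,1,2,7,8,13], [3,4,5,6,11,12], ![1,0,13,8,7,2,3,12,11,6,5,4,9,10], ![1,0,5,6,11,10,9,4,3,12,13,8,7,2]),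
  ([0,1,2,7,8,13], [3,4,9,10,11,12], ![0,1,2,7,8,13,12,3,4,9,10,11,6,5], ![0,1,2,7,8,13,12,3,4,9,10,11,6,5]),
  ([0,1,2,7,8,13], [4,5,6,9,10,11], ![2,1,0,13,8,7,6,5,4,9,10,11,12,3], ![2,1,0,13,8,7,6,5,4,9,10,11,12,3])]

def E4 : List Ent := [([0,1,4,5,9,10], [2,3,6,7,11,12], ![0,1,10,9,4,5,6,11,12,3,2,7,8,13], ![0,1,10,9,4,5,6,11,12,3,2,7,8,13]),
  ([0,1,4,5,9,10], [2,3,7,8,12,13], ![5,0,1,10,9,4,3,2,7,8,13,12,11,6], ![1,2,7,6,5,0,13,8,9,4,3,12,11,10]),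
  ([0,1,4,5,9,10], [6,7,8,11,12,13], ![1,0,5,4,9,10,11,6,7,8,13,12,3,2], ![1,0,13,12,3,2,7,8,9,4,5,6,11,10])]

def E5 : List Ent := [([0,1,5,6,10,11], [2,3,4,7,8,9], ![0,1,10,11,6,5,4,9,8,7,2,3,12,13], ![0,1,10,11,6,5,4,9,8,7,2,3,12,13]),
  ([0,1,5,6,10,11], [2,3,7,8,12,13], ![5,0,1,10,11,6,7,2,3,12,13,8,9,4], ![1,2,7,8,13,0,5,6,11,12,3,4,9,10]),
  ([0,1,5,6,10,11], [3,4,8,9,12,13], ![1,0,5,6,11,10,9,4,3,12,13,8,7,2], ![1,0,13,8,7,2,3,12,11,6,5,4,9,10])]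

def E6 : List Ent := [([0,1,8,9,10,13], [2,3,4,5,6,7], ![10,1,0,13,8,9,4,5,6,7,2,3,12,11], ![2,1,10,11,6,7,8,9,4,5,0,13,12,3]),
  ([0,1,8,9,10,13], [2,3,6,7,11,12], ![0,1,10,9,8,13,12,11,6,7,2,3,4,5], ![0,1,10,11,12,13,8,9,4,3,2,7,6,5]),
  ([0,1,8,9,10,13], [3,4,5,6,11,12], ![1,0,13,8,9,10,11,12,3,4,5,6,7,2], ![1,0,13,8,9,10,11,12,3,4,5,6,7,2])]

def E7 : List Ent := [([0,1,10,11,12,13], [2,3,4,5,6,7], ![10,1,0,13,12,11,6,5,4,3,2,7,8,9], ![2,1,10,9,8,7,6,11,12,13,0,5,4,3]),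
  ([0,1,10,11,12,13], [2,3,4,7,8,9], ![0,1,10,11,12,13,8,9,4,3,2,7,6,5], ![0,1,10,9,8,13,12,11,6,7,2,3,4,5]),
  ([0,1,10,11,12,13], [4,5,6,7,8,9], ![1,0,13,12,11,10,9,8,7,6,5,4,3,2], ![1,0,13,12,11,10,9,8,7,6,5,4,3,2])]

def E8 : List Ent := [([0,3,4,5,12,13], [1,2,6,7,10,11], ![4,3,12,13,0,5,6,11,10,1,2,7,8,9], ![4,9,10,1,0,5,6,11,12,13,8,7,2,3]),
  ([0,3,4,5,12,13], [1,2,7,8,9,10], ![5,0,13,12,3,4,9,8,7,2,1,10,11,6], ![1,10,9,4,5,0,13,8,7,6,11,12,3,2]),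
  ([0,3,4,5,12,13], [6,7,8,9,10,11], ![0,5,4,3,12,13,8,9,10,11,6,7,2,1], ![0,13,12,3,2,1,10,11,6,7,8,9,4,5])]

def E9 : List Ent := [([0,4,5,8,9,13], [1,2,3,10,11,12], ![5,0,13,8,9,4,3,12,11,10,1,2,7,6], ![1,10,11,6,5,0,13,12,3,4,9,8,7,2]),
  ([0,4,5,8,9,13], [1,2,6,7,10,11], ![4,5,0,13,8,9,10,1,2,7,6,11,12,3], ![2,7,8,13,0,1,10,9,4,5,6,11,12,3]),
  ([0,4,5,8,9,13], [2,3,6,7,11,12], ![0,5,4,9,8,13,12,3,2,7,6,11,10,1], ![0,13,8,7,2,1,10,9,4,3,12,11,6,5])]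

def E10 : List Ent := [([0,5,6,7,8,13], [1,2,3,4,9,10], ![6,5,0,13,8,7,2,1,10,9,4,3,12,11], ![2,7,6,11,10,1,0,5,4,9,8,13,12,3]),
  ([0,5,6,7,8,13], [1,2,3,10,11,12], ![5,0,13,8,7,6,11,12,3,2,1,10,9,4], ![1,10,9,8,13,0,5,4,3,12,11,6,7,2]),
  ([0,5,6,7,8,13], [3,4,9,10,11,12], ![0,5,6,7,8,13,12,11,10,9,4,3,2,1], ![0,13,12,11,10,1,2,3,4,9,8,7,6,5])]

def E11 : List Ent := [([0,5,6,11,12,13], [1,2,3,4,9,10], ![6,5,0,13,12,11,10,1,2,3,4,9,8,7], ![2,7,8,9,10,1,0,13,12,11,6,5,4,3]),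
  ([0,5,6,11,12,13], [1,2,7,8,9,10], ![5,0,13,12,11,6,7,8,9,10,1,2,3,4], ![1,10,11,12,13,0,5,6,7,8,9,4,3,2]),
  ([0,5,6,11,12,13], [2,3,4,7,8,9], ![0,5,6,11,12,13,8,7,2,3,4,9,10,1], ![0,13,8,9,10,1,2,7,6,11,12,3,4,5])]

def E12 : List Ent := [([1,2,3,4,9,10], [0,5,6,7,8,13], ![3,2,1,10,9,4,5,0,13,8,7,6,11,12], ![7,2,1,0,5,6,11,10,9,4,3,12,13,8]),
  ([1,2,3,4,9,10], [0,5,6,11,12,13], ![2,1,10,9,4,3,12,11,6,5,0,13,8,7], ![10,1,0,5,4,9,8,13,12,3,2,7,6,11]),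
  ([1,2,3,4,9,10], [6,7,8,11,12,13], ![1,2,3,4,9,10,11,12,13,8,7,6,5,0], ![13,0,1,2,3,12,11,10,9,4,5,6,7,8])]

def E13 : List Ent := [([1,2,3,10,11,12], [0,4,5,8,9,13], ![2,1,10,11,12,3,4,9,8,13,0,5,6,7], ![10,1,0,5,6,11,12,13,8,7,2,3,4,9]),
  ([1,2,3,10,11,12], [0,5,6,7,8,13], ![3,2,1,10,11,12,13,0,5,6,7,8,9,4], ![7,2,1,0,13,8,9,10,11,12,3,4,5,6]),
  ([1,2,3,10,11,12], [4,5,6,7,8,9], ![1,2,3,12,11,10,9,4,5,6,7,8,13,0], ![13,0,1,2,7,8,9,10,11,6,5,4,3,12])]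

def E14 : List Ent := [([1,2,6,7,10,11], [0,3,4,5,12,13], ![7,2,1,10,11,6,5,0,13,12,3,4,9,8], ![7,2,1,10,11,6,5,0,13,12,3,4,9,8]),
  ([1,2,6,7,10,11], [0,4,5,8,9,13], ![2,1,10,11,6,7,8,9,4,5,0,13,12,3], ![10,1,0,13,8,9,4,5,6,7,2,3,12,11]),
  ([1,2,6,7,10,11], [3,4,8,9,12,13], ![1,2,7,6,11,10,9,8,13,12,3,4,5,0], ![13,0,1,10,11,12,3,2,7,6,5,4,9,8])]

def E15 : List Ent := [([1,2,7,8,9,10], [0,3,4,5,12,13], ![7,2,1,10,9,8,13,0,5,4,3,12,11,6], ![7,2,1,10,9,8,13,0,5,4,3,12,11,6]),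
  ([1,2,7,8,9,10], [0,5,6,11,12,13], ![2,1,10,9,8,7,6,11,12,13,0,5,4,3], ![10,1,0,13,12,11,6,5,4,3,2,7,8,9]),
  ([1,2,7,8,9,10], [3,4,5,6,11,12], ![1,2,7,8,9,10,11,6,5,4,3,12,13,0], ![13,0,1,10,9,8,7,2,3,4,5,6,11,12])]

def E16 : List Ent := [([2,3,4,5,6,7], [0,1,8,9,10,13], ![3,2,7,6,5,4,9,8,13,0,1,10,11,12], ![9,10,1,0,5,4,3,2,7,6,11,12,13,8]),
  ([2,3,4,5,6,7], [0,1,10,11,12,13], ![4,3,2,7,6,5,0,1,10,11,12,13,8,9], ![6,7,2,1,0,5,4,3,12,13,8,9,10,11]),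
  ([2,3,4,5,6,7], [8,9,10,11,12,13], ![2,3,4,5,6,7,8,9,10,11,12,13,0,1], ![12,13,0,1,2,3,4,5,6,7,8,9,10,11])]

def E17 : List Ent := [([2,3,4,7,8,9], [0,1,5,6,10,11], ![3,2,7,8,9,4,5,6,11,10,1,0,13,12], ![11,10,1,0,5,6,7,2,3,4,9,8,13,12]),
  ([2,3,4,7,8,9], [0,1,10,11,12,13], ![4,3,2,7,8,9,10,1,0,13,12,11,6,5], ![8,7,2,1,0,13,12,3,4,5,6,11,10,9]),
  ([2,3,4,7,8,9], [0,5,6,11,12,13], ![2,3,4,9,8,7,6,5,0,13,12,11,10,1], ![8,13,0,1,2,7,6,5,4,3,12,11,10,9])]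

def E18 : List Ent := [([2,3,6,7,11,12], [0,1,4,5,9,10], ![7,2,3,12,11,6,5,4,9,10,1,0,13,8], ![11,10,1,2,7,6,5,0,13,8,9,4,3,12]),
  ([2,3,6,7,11,12], [0,1,8,9,10,13], ![3,2,7,6,11,12,13,8,9,10,1,0,5,4], ![11,10,1,0,13,12,3,2,7,8,9,4,5,6]),
  ([2,3,6,7,11,12], [0,4,5,8,9,13], ![2,3,12,11,6,7,8,13,0,5,4,9,10,1], ![8,13,0,1,10,9,4,5,6,11,12,3,2,7])]

def E19 : List Ent := [([2,3,7,8,12,13], [0,1,4,5,9,10], ![7,2,3,12,13,8,9,4,5,0,1,10,11,6], ![9,10,1,2,7,8,13,0,5,6,11,12,3,4]),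
  ([2,3,7,8,12,13], [0,1,5,6,10,11], ![3,2,7,8,13,12,11,6,5,0,1,10,9,4], ![9,10,1,0,13,8,7,2,3,12,11,6,5,4]),
  ([2,3,7,8,12,13], [4,5,6,9,10,11], ![2,3,12,13,8,7,6,11,10,9,4,5,0,1], ![12,13,0,1,10,11,6,5,4,9,8,7,2,3])]

def E20 : List Ent := [([3,4,5,6,11,12], [0,1,2,7,8,13], ![4,3,12,11,6,5,0,13,8,7,2,1,10,9], ![6,11,10,1,0,5,4,9,8,13,12,3,2,7]),
  ([3,4,5,6,11,12], [0,1,8,9,10,13], ![3,4,5,6,11,12,13,0,1,10,9,8,7,2], ![7,8,13,0,1,2,3,12,11,10,9,4,5,6]),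
  ([3,4,5,6,11,12], [1,2,7,8,9,10], ![5,4,3,12,11,6,7,2,1,10,9,8,13,0], ![13,8,7,2,1,0,5,6,11,10,9,4,3,12])]

def E21 : List Ent := [([3,4,8,9,12,13], [0,1,2,5,6,7], ![9,4,3,12,13,8,7,2,1,0,5,6,11,10], ![9,8,7,2,1,10,11,6,5,0,13,12,3,4]),
  ([3,4,8,9,12,13], [0,1,5,6,10,11], ![3,4,9,8,13,12,11,10,1,0,5,6,7,2], ![9,8,13,0,1,10,11,12,3,2,7,6,5,4]),
  ([3,4,8,9,12,13], [1,2,6,7,10,11], ![4,3,12,13,8,9,10,11,6,7,2,1,0,5], ![12,11,10,1,0,13,8,9,4,5,6,7,2,3])]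

def E22 : List Ent := [([3,4,9,10,11,12], [0,1,2,5,6,7], ![9,4,3,12,11,10,1,2,7,6,5,0,13,8], ![11,6,7,2,1,10,9,8,13,0,5,4,3,12]),
  ([3,4,9,10,11,12], [0,1,2,7,8,13], ![4,3,12,11,10,9,8,13,0,1,2,7,6,5], ![8,9,10,1,0,13,12,11,6,5,4,3,2,7]),
  ([3,4,9,10,11,12], [0,5,6,7,8,13], ![3,4,9,10,11,12,13,8,7,6,5,0,1,2], ![11,12,13,0,1,10,9,8,7,2,3,4,5,6])]

def E23 : List Ent := [([4,5,6,7,8,9], [0,1,2,3,12,13], ![6,5,4,9,8,7,2,3,12,13,0,1,10,11], ![10,11,6,7,2,1,0,5,4,3,12,13,8,9]),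
  ([4,5,6,7,8,9], [0,1,10,11,12,13], ![4,5,6,7,8,9,10,11,12,13,0,1,2,3], ![10,11,12,13,0,1,2,3,4,5,6,7,8,9]),
  ([4,5,6,7,8,9], [1,2,3,10,11,12], ![5,4,9,8,7,6,11,10,1,2,3,12,13,0], ![13,8,9,10,1,0,5,4,3,2,7,6,11,12])]

def E24 : List Ent := [([4,5,6,9,10,11], [0,1,2,3,12,13], ![6,5,4,9,10,11,12,3,2,1,0,13,8,7], ![10,9,8,7,2,1,0,13,12,3,4,5,6,11]),
  ([4,5,6,9,10,11], [0,1,2,7,8,13], ![4,5,6,11,10,9,8,7,2,1,0,13,12,3], ![10,9,8,13,0,1,2,7,6,5,4,3,12,11]),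
  ([4,5,6,9,10,11], [2,3,7,8,12,13], ![5,4,9,10,11,6,7,8,13,12,3,2,1,0], ![13,12,11,10,1,0,5,6,7,2,3,4,9,8])]

def E25 : List Ent := [([6,7,8,9,10,11], [0,1,2,3,4,5], ![8,7,6,11,10,9,4,5,0,1,2,3,12,13], ![8,9,10,11,6,7,2,1,0,5,4,3,12,13]),
  ([6,7,8,9,10,11], [0,1,2,3,12,13], ![6,7,8,9,10,11,12,13,0,1,2,3,4,5], ![8,9,10,11,12,13,0,1,2,3,4,5,6,7]),
  ([6,7,8,9,10,11], [0,3,4,5,12,13], ![7,6,11,10,9,8,13,12,3,4,5,0,1,2], ![11,12,13,8,9,10,1,0,5,4,3,2,7,6])]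

def E26 : List Ent := [([6,7,8,11,12,13], [0,1,2,3,4,5], ![8,7,6,11,12,13,0,5,4,3,2,1,10,9], ![6,11,10,9,8,7,2,1,0,13,12,3,4,5]),
  ([6,7,8,11,12,13], [0,1,4,5,9,10], ![7,6,11,12,13,8,9,10,1,0,5,4,3,2], ![9,8,13,12,11,10,1,0,5,6,7,2,3,4]),
  ([6,7,8,11,12,13], [1,2,3,4,9,10], ![6,7,8,13,12,11,10,9,4,3,2,1,0,5], ![12,11,10,9,8,13,0,1,2,7,6,5,4,3])]

def E27 : List Ent := [([8,9,10,11,12,13], [0,1,2,3,4,5], ![8,9,10,11,12,13,0,1,2,3,4,5,6,7], ![6,7,8,9,10,11,12,13,0,1,2,3,4,5]),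
  ([8,9,10,11,12,13], [0,1,2,5,6,7], ![9,8,13,12,11,10,1,0,5,6,7,2,3,4], ![7,6,11,12,13,8,9,10,1,0,5,4,3,2]),
  ([8,9,10,11,12,13], [2,3,4,5,6,7], ![10,9,8,13,12,11,6,7,2,3,4,5,0,1], ![12,13,8,9,10,11,6,7,2,1,0,5,4,3])]

theorem aut0 : ∀ e ∈ E0, EntOK e := by decide

theorem aut1 : ∀ e ∈ E1, EntOK e := by decide

theorem aut2 : ∀ e ∈ E2, EntOK e := by decide

theorem aut3 : ∀ e ∈ E3, EntOK e := by decide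

theorem aut4 : ∀ e ∈ E4, EntOK e := by decide

theorem aut5 : ∀ e ∈ E5, EntOK e := by decide

theorem aut6 : ∀ e ∈ E6, EntOK e := by decide

theorem aut7 : ∀ e ∈ E7, EntOK e := by decide

theorem aut8 : ∀ e ∈ E8, EntOK e := by decide

theorem aut9 : ∀ e ∈ E9, EntOK e := by decide

theorem aut10 : ∀ e ∈ E10, EntOK e := by decide

theorem aut11 : ∀ e ∈ E11, EntOK e := by decide

theorem aut12 : ∀ e ∈ E12, EntOK e := by decide

theorem aut13 : ∀ e ∈ E13, EntOK e := by decide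

theorem aut14 : ∀ e ∈ E14, EntOK e := by decide

theorem aut15 : ∀ e ∈ E15, EntOK e := by decide

theorem aut16 : ∀ e ∈ E16, EntOK e := by decide

theorem aut17 : ∀ e ∈ E17, EntOK e := by decide

theorem aut18 : ∀ e ∈ E18, EntOK e := by decide

theorem aut19 : ∀ e ∈ E19, EntOK e := by decide

theorem aut20 : ∀ e ∈ E20, EntOK e := by decide

theorem aut21 : ∀ e ∈ E21, EntOK e := by decide

theorem aut22 : ∀ e ∈ E22, EntOK e := by decide

theorem aut23 : ∀ e ∈ E23, EntOK e := by decide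

theorem aut24 : ∀ e ∈ E24, EntOK e := by decide

theorem aut25 : ∀ e ∈ E25, EntOK e := by decide

theorem aut26 : ∀ e ∈ E26, EntOK e := by decide

theorem aut27 : ∀ e ∈ E27, EntOK e := by decide

theorem cover0 : ∀ t ∈ L28, (∀ x ∈ ([0,1,2,3,4,5] : List (ZMod 14)), x ∉ t) → ∃ e ∈ E0, e.1 = [0,1,2,3,4,5] ∧ e.2.1 = t := by decide

theorem cover1 : ∀ t ∈ L28, (∀ x ∈ ([0,1,2,3,12,13] : List (ZMod 14)), x ∉ t) → ∃ e ∈ E1, e.1 = [0,1,2,3,12,13] ∧ e.2.1 = t := by decide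

theorem cover2 : ∀ t ∈ L28, (∀ x ∈ ([0,1,2,5,6,7] : List (ZMod 14)), x ∉ t) → ∃ e ∈ E2, e.1 = [0,1,2,5,6,7] ∧ e.2.1 = t := by decide

theorem cover3 : ∀ t ∈ L28, (∀ x ∈ ([0,1,2,7,8,13] : List (ZMod 14)), x ∉ t) → ∃ e ∈ E3, e.1 = [0,1,2,7,8,13] ∧ e.2.1 = t := by decide

theorem cover4 : ∀ t ∈ L28, (∀ x ∈ ([0,1,4,5,9,10] : List (ZMod 14)), x ∉ t) → ∃ e ∈ E4, e.1 = [0,1,4,5,9,10] ∧ e.2.1 = t := by decide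

theorem cover5 : ∀ t ∈ L28, (∀ x ∈ ([0,1,5,6,10,11] : List (ZMod 14)), x ∉ t) → ∃ e ∈ E5, e.1 = [0,1,5,6,10,11] ∧ e.2.1 = t := by decide

theorem cover6 : ∀ t ∈ L28, (∀ x ∈ ([0,1,8,9,10,13] : List (ZMod 14)), x ∉ t) → ∃ e ∈ E6, e.1 = [0,1,8,9,10,13] ∧ e.2.1 = t := by decide

theorem cover7 : ∀ t ∈ L28, (∀ x ∈ ([0,1,10,11,12,13] : List (ZMod 14)), x ∉ t) → ∃ e ∈ E7, e.1 = [0,1,10,11,12,13] ∧ e.2.1 = t := by decide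

theorem cover8 : ∀ t ∈ L28, (∀ x ∈ ([0,3,4,5,12,13] : List (ZMod 14)), x ∉ t) → ∃ e ∈ E8, e.1 = [0,3,4,5,12,13] ∧ e.2.1 = t := by decide

theorem cover9 : ∀ t ∈ L28, (∀ x ∈ ([0,4,5,8,9,13] : List (ZMod 14)), x ∉ t) → ∃ e ∈ E9, e.1 = [0,4,5,8,9,13] ∧ e.2.1 = t := by decide

theorem cover10 : ∀ t ∈ L28, (∀ x ∈ ([0,5,6,7,8,13] : List (ZMod 14)), x ∉ t) → ∃ e ∈ E10, e.1 = [0,5,6,7,8,13] ∧ e.2.1 = t := by decide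

theorem cover11 : ∀ t ∈ L28, (∀ x ∈ ([0,5,6,11,12,13] : List (ZMod 14)), x ∉ t) → ∃ e ∈ E11, e.1 = [0,5,6,11,12,13] ∧ e.2.1 = t := by decide

theorem cover12 : ∀ t ∈ L28, (∀ x ∈ ([1,2,3,4,9,10] : List (ZMod 14)), x ∉ t) → ∃ e ∈ E12, e.1 = [1,2,3,4,9,10] ∧ e.2.1 = t := by decide

theorem cover13 : ∀ t ∈ L28, (∀ x ∈ ([1,2,3,10,11,12] : List (ZMod 14)), x ∉ t) → ∃ e ∈ E13, e.1 = [1,2,3,10,11,12] ∧ e.2.1 = t := by decide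

theorem cover14 : ∀ t ∈ L28, (∀ x ∈ ([1,2,6,7,10,11] : List (ZMod 14)), x ∉ t) → ∃ e ∈ E14, e.1 = [1,2,6,7,10,11] ∧ e.2.1 = t := by decide

theorem cover15 : ∀ t ∈ L28, (∀ x ∈ ([1,2,7,8,9,10] : List (ZMod 14)), x ∉ t) → ∃ e ∈ E15, e.1 = [1,2,7,8,9,10] ∧ e.2.1 = t := by decide

theorem cover16 : ∀ t ∈ L28, (∀ x ∈ ([2,3,4,5,6,7] : List (ZMod 14)), x ∉ t) → ∃ e ∈ E16, e.1 = [2,3,4,5,6,7] ∧ e.2.1 = t := by decide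

theorem cover17 : ∀ t ∈ L28, (∀ x ∈ ([2,3,4,7,8,9] : List (ZMod 14)), x ∉ t) → ∃ e ∈ E17, e.1 = [2,3,4,7,8,9] ∧ e.2.1 = t := by decide

theorem cover18 : ∀ t ∈ L28, (∀ x ∈ ([2,3,6,7,11,12] : List (ZMod 14)), x ∉ t) → ∃ e ∈ E18, e.1 = [2,3,6,7,11,12] ∧ e.2.1 = t := by decide

theorem cover19 : ∀ t ∈ L28, (∀ x ∈ ([2,3,7,8,12,13] : List (ZMod 14)), x ∉ t) → ∃ e ∈ E19, e.1 = [2,3,7,8,12,13] ∧ e.2.1 = t := by decide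

theorem cover20 : ∀ t ∈ L28, (∀ x ∈ ([3,4,5,6,11,12] : List (ZMod 14)), x ∉ t) → ∃ e ∈ E20, e.1 = [3,4,5,6,11,12] ∧ e.2.1 = t := by decide

theorem cover21 : ∀ t ∈ L28, (∀ x ∈ ([3,4,8,9,12,13] : List (ZMod 14)), x ∉ t) → ∃ e ∈ E21, e.1 = [3,4,8,9,12,13] ∧ e.2.1 = t := by decide

theorem cover22 : ∀ t ∈ L28, (∀ x ∈ ([3,4,9,10,11,12] : List (ZMod 14)), x ∉ t) → ∃ e ∈ E22, e.1 = [3,4,9,10,11,12] ∧ e.2.1 = t := by decide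

theorem cover23 : ∀ t ∈ L28, (∀ x ∈ ([4,5,6,7,8,9] : List (ZMod 14)), x ∉ t) → ∃ e ∈ E23, e.1 = [4,5,6,7,8,9] ∧ e.2.1 = t := by decide

theorem cover24 : ∀ t ∈ L28, (∀ x ∈ ([4,5,6,9,10,11] : List (ZMod 14)), x ∉ t) → ∃ e ∈ E24, e.1 = [4,5,6,9,10,11] ∧ e.2.1 = t := by decide

theorem cover25 : ∀ t ∈ L28, (∀ x ∈ ([6,7,8,9,10,11] : List (ZMod 14)), x ∉ t) → ∃ e ∈ E25, e.1 = [6,7,8,9,10,11] ∧ e.2.1 = t := by decide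

theorem cover26 : ∀ t ∈ L28, (∀ x ∈ ([6,7,8,11,12,13] : List (ZMod 14)), x ∉ t) → ∃ e ∈ E26, e.1 = [6,7,8,11,12,13] ∧ e.2.1 = t := by decide

theorem cover27 : ∀ t ∈ L28, (∀ x ∈ ([8,9,10,11,12,13] : List (ZMod 14)), x ∉ t) → ∃ e ∈ E27, e.1 = [8,9,10,11,12,13] ∧ e.2.1 = t := by decide

set_option maxRecDepth 10000 in
set_option synthInstance.maxHeartbeats 1000000 in
set_option synthInstance.maxSize 3000 in
set_option maxHeartbeats 4000000 in
theorem K : ∀ v0 v1 : ZMod 14, v1 ∈ nbrs v0 → ∀ v2, v2 ∈ nbrs v1 →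
    ∀ v3, v3 ∈ nbrs v2 → ∀ v4, v4 ∈ nbrs v3 → ∀ v5, v5 ∈ nbrs v4 →
    v0 ∈ nbrs v5 →
    (∀ i j : Fin 6, ![v0,v1,v2,v3,v4,v5] i = ![v0,v1,v2,v3,v4,v5] j → i = j) →
    (∃ l ∈ L28, ∀ x : ZMod 14, x ∈ l ↔ (x = v0 ∨ x = v1 ∨ x = v2 ∨ x = v3 ∨ x = v4 ∨ x = v5)) ∧
    ∀ i j : Fin 6, ![v0,v1,v2,v3,v4,v5] j ∈ nbrs (![v0,v1,v2,v3,v4,v5] i) →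
      (SimpleGraph.cycleGraph 6).Adj i j := by decide

/-- The induced subgraph of the Heawood graph on a list of vertices. -/
def mkSub (l : List (ZMod 14)) : heawood.Subgraph where
  verts := {x | x ∈ l}
  Adj a b := a ∈ l ∧ b ∈ l ∧ heawood.Adj a b
  adj_sub h := h.2.2
  edge_vert h := h.1
  symm := ⟨fun a b h => ⟨h.2.1, h.1, h.2.2.symm⟩⟩

open SimpleGraph

/-- Every 6-cycle of the Heawood graph is the induced subgraph on one of the 28 sets. -/
theorem cycle_classify (C : heawood.Subgraph) (h : IsNCycle 6 C) :
    ∃ l ∈ L28, C = mkSub l := by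
  obtain ⟨e⟩ := h
  set f : Fin 6 → ZMod 14 := fun i => ((e.symm i : C.verts) : ZMod 14) with hf
  have hfC : ∀ i j : Fin 6, (cycleGraph 6).Adj i j → C.Adj (f i) (f j) := by
    intro i j hij
    have h2 : C.coe.Adj (e.symm i) (e.symm j) := e.symm.map_adj_iff.mpr hij
    exact h2
  have hinj : Function.Injective f := by
    intro i j hij
    exact e.symm.injective (Subtype.val_injective hij)
  have hM : ∀ i : Fin 6, ![f 0, f 1, f 2, f 3, f 4, f 5] i = f i := by
    intro i; fin_cases i <;> rfl
  have hcons : ∀ i j : Fin 6, (cycleGraph 6).Adj i j → f j ∈ nbrs (f i) := by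
    intro i j hij
    exact (adj_iff_nbrs _ _).mp (C.adj_sub (hfC i j hij))
  have hK := K (f 0) (f 1) (hcons 0 1 (by decide)) (f 2) (hcons 1 2 (by decide))
      (f 3) (hcons 2 3 (by decide)) (f 4) (hcons 3 4 (by decide))
      (f 5) (hcons 4 5 (by decide)) (hcons 5 0 (by decide))
      (by intro i j hij; exact hinj (by rw [← hM i, ← hM j, hij]))
  obtain ⟨⟨l, hl, hiff⟩, hchord⟩ := hK
  refine ⟨l, hl, ?_⟩
  have hex : ∀ x ∈ l, ∃ i : Fin 6, f i = x := by
    intro x hx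
    rcases (hiff x).mp hx with h'|h'|h'|h'|h'|h'
    exacts [⟨0, h'.symm⟩, ⟨1, h'.symm⟩, ⟨2, h'.symm⟩, ⟨3, h'.symm⟩, ⟨4, h'.symm⟩, ⟨5, h'.symm⟩]
  have hrange : C.verts = {x | x ∈ l} := by
    ext x
    constructor
    · intro hx
      have hx2 : f (e ⟨x, hx⟩) = x := by simp [hf]
      have hfi : ∀ i : Fin 6, f i ∈ l := by
        intro i
        apply (hiff (f i)).mpr
        fin_cases i
        exacts [Or.inl rfl, Or.inr (Or.inl rfl), Or.inr (Or.inr (Or.inl rfl)),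
          Or.inr (Or.inr (Or.inr (Or.inl rfl))),
          Or.inr (Or.inr (Or.inr (Or.inr (Or.inl rfl)))),
          Or.inr (Or.inr (Or.inr (Or.inr (Or.inr rfl))))]
      rw [← hx2]
      exact hfi _
    · intro hx
      obtain ⟨i, rfl⟩ := hex x hx
      exact (e.symm i).2
  apply Subgraph.ext
  · exact hrange
  · funext a b
    apply propext
    constructor
    · intro hab
      refine ⟨?_, ?_, C.adj_sub hab⟩
      · have := C.edge_vert hab; rw [hrange] at this; exact this
      · have := C.edge_vert hab.symm; rw [hrange] at this; exact this
    · rintro ⟨ha, hb, hab⟩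
      obtain ⟨i, rfl⟩ := hex a ha
      obtain ⟨j, rfl⟩ := hex b hb
      refine hfC i j (hchord i j ?_)
      rw [hM i, hM j]
      exact (adj_iff_nbrs _ _).mp hab

theorem map_mkSub (φ : heawood ≃g heawood) (l l' : List (ZMod 14))
    (hl : ∀ x : ZMod 14, x ∈ l' ↔ ∃ y ∈ l, φ y = x) :
    (mkSub l).map φ.toHom = mkSub l' := by
  apply Subgraph.ext
  · show ⇑φ '' {x | x ∈ l} = {x | x ∈ l'}
    ext x
    constructor
    · rintro ⟨y, hy, rfl⟩
      exact (hl _).mpr ⟨y, hy, rfl⟩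
    · intro hx
      obtain ⟨y, hy, rfl⟩ := (hl x).mp hx
      exact ⟨y, hy, rfl⟩
  · funext a b
    apply propext
    show Relation.Map (mkSub l).Adj ⇑φ ⇑φ a b ↔ _
    constructor
    · rintro ⟨u, v, ⟨hu, hv, huv⟩, rfl, rfl⟩
      exact ⟨(hl _).mpr ⟨u, hu, rfl⟩, (hl _).mpr ⟨v, hv, rfl⟩, φ.map_adj_iff.mpr huv⟩
    · rintro ⟨ha, hb, hab⟩
      obtain ⟨u, hu, rfl⟩ := (hl a).mp ha
      obtain ⟨v, hv, rfl⟩ := (hl b).mp hb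
      exact ⟨u, v, ⟨hu, hv, φ.map_adj_iff.mp hab⟩, rfl, rfl⟩

/-- Build a Heawood automorphism from a function and its inverse. -/
def mkIso (p q : ZMod 14 → ZMod 14) (h1 : ∀ x, q (p x) = x) (h2 : ∀ x, p (q x) = x)
    (h3 : ∀ x y : ZMod 14, y ∈ nbrs x → p y ∈ nbrs (p x))
    (h4 : ∀ x y : ZMod 14, y ∈ nbrs x → q y ∈ nbrs (q x)) : heawood ≃g heawood where
  toEquiv := ⟨p, q, h1, h2⟩
  map_rel_iff' := by
    intro x y
    constructor
    · intro h
      have h5 := h4 (p x) (p y) ((adj_iff_nbrs _ _).mp h)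
      rw [h1, h1] at h5
      exact (adj_iff_nbrs _ _).mpr h5
    · intro h
      exact (adj_iff_nbrs _ _).mpr (h3 x y ((adj_iff_nbrs _ _).mp h))

theorem helper (E : List Ent) (s t : List (ZMod 14))
    (hA : ∀ e ∈ E, EntOK e) (hc : ∃ e ∈ E, e.1 = s ∧ e.2.1 = t) :
    ∃ φ : heawood ≃g heawood, (mkSub s0).map φ.toHom = mkSub s ∧
      (mkSub t0).map φ.toHom = mkSub t := by
  obtain ⟨en, he, h1, h2⟩ := hc
  obtain ⟨l1, l2, m1, m2, i1, i2⟩ := hA en he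
  subst h1 h2
  exact ⟨mkIso (pf en) (qf en) l1 l2 m1 m2, map_mkSub _ _ _ i1, map_mkSub _ _ _ i2⟩

theorem getIso : ∀ s ∈ L28, ∀ t ∈ L28, (∀ x ∈ s, x ∉ t) →
    ∃ φ : heawood ≃g heawood, (mkSub s0).map φ.toHom = mkSub s ∧
      (mkSub t0).map φ.toHom = mkSub t := by
  intro s hs
  fin_cases hs
  exacts [fun t ht hd => helper E0 _ _ aut0 (cover0 t ht hd),
    fun t ht hd => helper E1 _ _ aut1 (cover1 t ht hd),
    fun t ht hd => helper E2 _ _ aut2 (cover2 t ht hd),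
    fun t ht hd => helper E3 _ _ aut3 (cover3 t ht hd),
    fun t ht hd => helper E4 _ _ aut4 (cover4 t ht hd),
    fun t ht hd => helper E5 _ _ aut5 (cover5 t ht hd),
    fun t ht hd => helper E6 _ _ aut6 (cover6 t ht hd),
    fun t ht hd => helper E7 _ _ aut7 (cover7 t ht hd),
    fun t ht hd => helper E8 _ _ aut8 (cover8 t ht hd),
    fun t ht hd => helper E9 _ _ aut9 (cover9 t ht hd),
    fun t ht hd => helper E10 _ _ aut10 (cover10 t ht hd),
    fun t ht hd => helper E11 _ _ aut11 (cover11 t ht hd),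
    fun t ht hd => helper E12 _ _ aut12 (cover12 t ht hd),
    fun t ht hd => helper E13 _ _ aut13 (cover13 t ht hd),
    fun t ht hd => helper E14 _ _ aut14 (cover14 t ht hd),
    fun t ht hd => helper E15 _ _ aut15 (cover15 t ht hd),
    fun t ht hd => helper E16 _ _ aut16 (cover16 t ht hd),
    fun t ht hd => helper E17 _ _ aut17 (cover17 t ht hd),
    fun t ht hd => helper E18 _ _ aut18 (cover18 t ht hd),
    fun t ht hd => helper E19 _ _ aut19 (cover19 t ht hd),
    fun t ht hd => helper E20 _ _ aut20 (cover20 t ht hd),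
    fun t ht hd => helper E21 _ _ aut21 (cover21 t ht hd),
    fun t ht hd => helper E22 _ _ aut22 (cover22 t ht hd),
    fun t ht hd => helper E23 _ _ aut23 (cover23 t ht hd),
    fun t ht hd => helper E24 _ _ aut24 (cover24 t ht hd),
    fun t ht hd => helper E25 _ _ aut25 (cover25 t ht hd),
    fun t ht hd => helper E26 _ _ aut26 (cover26 t ht hd),
    fun t ht hd => helper E27 _ _ aut27 (cover27 t ht hd)]

/-- The automorphism group of the Heawood graph acts transitively on unordered pairs of
vertex-disjoint `6`-cycles: some automorphism maps `{A₁, A₂}` onto `{B₁, B₂}` as a pair of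
subgraphs (and hence maps `A₁ ⊔ A₂` onto `B₁ ⊔ B₂`). -/
theorem heawood_aut_transitive_on_disjoint_six_cycle_pairs
    (A₁ A₂ B₁ B₂ : heawood.Subgraph)
    (hA₁ : IsNCycle 6 A₁) (hA₂ : IsNCycle 6 A₂) (hA : Disjoint A₁.verts A₂.verts)
    (hB₁ : IsNCycle 6 B₁) (hB₂ : IsNCycle 6 B₂) (hB : Disjoint B₁.verts B₂.verts) :
    ∃ φ : heawood ≃g heawood,
      ((A₁.map φ.toHom = B₁ ∧ A₂.map φ.toHom = B₂) ∨
       (A₁.map φ.toHom = B₂ ∧ A₂.map φ.toHom = B₁)) ∧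
      (A₁ ⊔ A₂).map φ.toHom = B₁ ⊔ B₂ := by
  obtain ⟨sa1, hsa1, rfl⟩ := cycle_classify A₁ hA₁
  obtain ⟨sa2, hsa2, rfl⟩ := cycle_classify A₂ hA₂
  obtain ⟨sb1, hsb1, rfl⟩ := cycle_classify B₁ hB₁
  obtain ⟨sb2, hsb2, rfl⟩ := cycle_classify B₂ hB₂
  have hdA : ∀ x ∈ sa1, x ∉ sa2 := by
    intro x hx
    exact Set.disjoint_left.mp hA hx
  have hdB : ∀ x ∈ sb1, x ∉ sb2 := by
    intro x hx
    exact Set.disjoint_left.mp hB hx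
  obtain ⟨φA, hφA1, hφA2⟩ := getIso sa1 hsa1 sa2 hsa2 hdA
  obtain ⟨φB, hφB1, hφB2⟩ := getIso sb1 hsb1 sb2 hsb2 hdB
  let φ : heawood ≃g heawood := φA.symm.trans φB
  have hcomp : φ.toHom.comp φA.toHom = φB.toHom := by
    apply DFunLike.ext
    intro x
    show φB (φA.symm (φA x)) = φB x
    rw [RelIso.symm_apply_apply]
  have k1 : (mkSub sa1).map φ.toHom = mkSub sb1 := by
    rw [← hφA1, ← SimpleGraph.Subgraph.map_comp, hcomp, hφB1]
  have k2 : (mkSub sa2).map φ.toHom = mkSub sb2 := by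
    rw [← hφA2, ← SimpleGraph.Subgraph.map_comp, hcomp, hφB2]
  exact ⟨φ, Or.inl ⟨k1, k2⟩, by rw [SimpleGraph.Subgraph.map_sup, k1, k2]⟩
end
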